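/- arXiv:1511.05192 — 2 statements merged into one kernel-verified Lean document; each statement's English description precedes it below -/
import Mathlib

section
/- Fix a > 0, an integer n ≥ 0, an integer k with 0 ≤ k ≤ n, and θ ∈ (0,1). For any sequences (s_j) and (t_j) of positive reals with 0 < s_j < t_j, t_j → ∞ and s_j/t_j → θ, one has lim_{j→∞} C(n,k) · B_k(a s_j) B_{n-k}(a(t_j - s_j)) / B_n(a t_j) = C(n,k) θ^k (1-θ)^{n-k}; in other words, the conditional distribution of the iterated Poisson process converges to a binomial distribution with parameters n and θ. (The key fact is that B_n(x)/x^n → 1 as x → ∞.) -/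
/-!
Expanding `k ^ n` in falling factorials with Stirling numbers of the second kind turns the
series into `B_n(x) = ∑ₘ S(n, m) xᵐ`, a monic polynomial of degree `n`, so `B_n(x) / xⁿ → 1`.
Dividing numerator and denominator by `(a t)ⁿ`, the ratio becomes
`(B_k(as) / (as)ᵏ) (B_{n-k}(a(t-s)) / (a(t-s))ⁿ⁻ᵏ) / (B_n(at) / (at)ⁿ) · (s/t)ᵏ (1 - s/t)ⁿ⁻ᵏ`,
and the three normalized Bell factors tend to `1` because `s`, `t - s` and `t` tend to infinity.
-/

open scoped BigOperators
open Filter MeasureTheory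

/-- Bell polynomial: `B n x = e^{-x} * Σ_{k=0}^∞ k^n x^k / k!` (n-th moment of Poisson(x)). -/
noncomputable def bell (n : ℕ) (x : ℝ) : ℝ :=
  Real.exp (-x) * ∑' k : ℕ, (k : ℝ) ^ n * x ^ k / (Nat.factorial k : ℝ)

open Topology Finset Nat

theorem Nat.mul_descFactorial_eq_descFactorial_succ_add (k m : ℕ) :
    k * k.descFactorial m = k.descFactorial (m + 1) + m * k.descFactorial m := by
  rcases lt_or_ge k m with h | h
  · simp [descFactorial_eq_zero_iff_lt.2 h]
  · rw [descFactorial_succ, ← add_mul, Nat.sub_add_cancel h]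

theorem Nat.pow_eq_sum_stirlingSecond_mul_descFactorial (k n : ℕ) :
    k ^ n = ∑ m ∈ range (n + 1), stirlingSecond n m * k.descFactorial m := by
  induction n with
  | zero => simp
  | succ n ih =>
    have shift : ∑ m ∈ range (n + 1), (m + 1) * stirlingSecond n (m + 1) * k.descFactorial (m + 1)
        = ∑ m ∈ range (n + 1), m * stirlingSecond n m * k.descFactorial m := by
      have h := sum_range_succ' (fun m => m * stirlingSecond n m * k.descFactorial m) (n + 1)
      rw [sum_range_succ, stirlingSecond_eq_zero_of_lt n.lt_succ_self] at h
      simpa using h.symm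
    calc k ^ (n + 1)
        = ∑ m ∈ range (n + 1), stirlingSecond n m * (k * k.descFactorial m) := by
          rw [pow_succ', ih, mul_sum]
          exact sum_congr rfl fun m _ => mul_left_comm _ _ _
      _ = ∑ m ∈ range (n + 1), stirlingSecond n m * k.descFactorial (m + 1)
            + ∑ m ∈ range (n + 1), (m + 1) * stirlingSecond n (m + 1) * k.descFactorial (m + 1) := by
          rw [shift, ← sum_add_distrib]
          refine sum_congr rfl fun m _ => ?_
          rw [mul_descFactorial_eq_descFactorial_succ_add]
          ring
      _ = ∑ m ∈ range (n + 2), stirlingSecond (n + 1) m * k.descFactorial m := by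
          rw [← sum_add_distrib, sum_range_succ' _ (n + 1)]
          simp only [stirlingSecond_succ_succ, stirlingSecond_succ_zero, zero_mul, add_zero]
          exact sum_congr rfl fun m _ => by ring

theorem hasSum_descFactorial_mul_pow_div_factorial (m : ℕ) (x : ℝ) :
    HasSum (fun k : ℕ => (k.descFactorial m : ℝ) * x ^ k / k !) (x ^ m * Real.exp x) := by
  have shifted (j : ℕ) :
      ((j + m).descFactorial m : ℝ) * x ^ (j + m) / (j + m)! = x ^ m * (x ^ j / j !) := by
    have h := factorial_mul_descFactorial (Nat.le_add_left m j)
    rw [Nat.add_sub_cancel] at h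
    rw [← h, Nat.cast_mul, pow_add]
    field_simp
  have initial : ∑ i ∈ range m, (i.descFactorial m : ℝ) * x ^ i / i ! = 0 :=
    sum_eq_zero fun i hi => by simp [descFactorial_eq_zero_iff_lt.2 (mem_range.1 hi)]
  rw [← hasSum_nat_add_iff' m, initial, sub_zero, funext shifted, Real.exp_eq_exp_ℝ]
  exact (NormedSpace.expSeries_div_hasSum_exp x).mul_left (x ^ m)

theorem hasSum_pow_mul_pow_div_factorial (n : ℕ) (x : ℝ) :
    HasSum (fun k : ℕ => (k : ℝ) ^ n * x ^ k / k !)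
      ((∑ m ∈ range (n + 1), (stirlingSecond n m : ℝ) * x ^ m) * Real.exp x) := by
  have expand (k : ℕ) : (k : ℝ) ^ n * x ^ k / k ! =
      ∑ m ∈ range (n + 1), (stirlingSecond n m : ℝ) * ((k.descFactorial m : ℝ) * x ^ k / k !) := by
    rw [← Nat.cast_pow, pow_eq_sum_stirlingSecond_mul_descFactorial k n]
    push_cast
    rw [sum_mul, sum_div]
    exact sum_congr rfl fun m _ => by ring
  rw [funext expand, sum_mul]
  simp_rw [mul_assoc]
  exact hasSum_sum fun m _ =>
    (hasSum_descFactorial_mul_pow_div_factorial m x).mul_left (stirlingSecond n m : ℝ)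

theorem bell_eq_sum_stirlingSecond (n : ℕ) (x : ℝ) :
    bell n x = ∑ m ∈ range (n + 1), (stirlingSecond n m : ℝ) * x ^ m := by
  rw [bell, (hasSum_pow_mul_pow_div_factorial n x).tsum_eq, mul_left_comm, ← Real.exp_add,
    neg_add_cancel, Real.exp_zero, mul_one]

theorem bell_pos (n : ℕ) {x : ℝ} (hx : 0 < x) : 0 < bell n x := by
  rw [bell_eq_sum_stirlingSecond, sum_range_succ, stirlingSecond_self, cast_one, one_mul]
  exact add_pos_of_nonneg_of_pos (sum_nonneg fun m _ => by positivity) (pow_pos hx n)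

theorem tendsto_bell_div_pow_atTop (n : ℕ) :
    Tendsto (fun x => bell n x / x ^ n) atTop (𝓝 1) := by
  have lower : Tendsto (fun x : ℝ => ∑ m ∈ range n, (stirlingSecond n m : ℝ) * (x ^ m / x ^ n))
      atTop (𝓝 0) := by
    simpa using tendsto_finsetSum (range n) fun m hm =>
      (tendsto_pow_div_pow_atTop_zero (mem_range.1 hm)).const_mul (stirlingSecond n m : ℝ)
  refine (zero_add (1 : ℝ) ▸ lower.add_const 1).congr' ?_
  filter_upwards [eventually_ne_atTop 0] with x hx
  rw [bell_eq_sum_stirlingSecond, sum_range_succ, stirlingSecond_self, cast_one, one_mul, add_div,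
    sum_div, div_self (pow_ne_zero n hx)]
  simp only [mul_div_assoc]

theorem tendsto_bell_mul_bell_div_bell {ι : Type*} {l : Filter ι} {θ : ℝ} (hθ : θ ∈ Set.Ioo 0 1)
    {s t : ι → ℝ} (hs : ∀ j, 0 < s j) (hst : ∀ j, s j < t j) (ht : Tendsto t l atTop)
    (hratio : Tendsto (fun j => s j / t j) l (𝓝 θ)) (k m : ℕ) :
    Tendsto (fun j => bell k (s j) * bell m (t j - s j) / bell (k + m) (t j)) l
      (𝓝 (θ ^ k * (1 - θ) ^ m)) := by
  have ht0 (j : ι) : 0 < t j := (hs j).trans (hst j)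
  have hcompl : Tendsto (fun j => 1 - s j / t j) l (𝓝 (1 - θ)) := tendsto_const_nhds.sub hratio
  have hs_top : Tendsto s l atTop :=
    (ht.atTop_mul_pos hθ.1 hratio).congr fun j => mul_div_cancel₀ (s j) (ht0 j).ne'
  have hts_top : Tendsto (fun j => t j - s j) l atTop :=
    (ht.atTop_mul_pos (sub_pos.2 hθ.2) hcompl).congr fun j => by field_simp [(ht0 j).ne']
  have key : Tendsto (fun j => bell k (s j) / s j ^ k * (bell m (t j - s j) / (t j - s j) ^ m)
      / (bell (k + m) (t j) / t j ^ (k + m)) * ((s j / t j) ^ k * (1 - s j / t j) ^ m)) l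
      (𝓝 (1 * 1 / 1 * (θ ^ k * (1 - θ) ^ m))) :=
    ((((tendsto_bell_div_pow_atTop k).comp hs_top).mul
      ((tendsto_bell_div_pow_atTop m).comp hts_top)).div
      ((tendsto_bell_div_pow_atTop (k + m)).comp ht) one_ne_zero).mul
      ((hratio.pow k).mul (hcompl.pow m))
  rw [mul_one, div_one, one_mul] at key
  refine key.congr fun j => ?_
  have hs0 := (hs j).ne'
  have htne := (ht0 j).ne'
  have hts0 := (sub_pos.2 (hst j)).ne'
  have hb := (bell_pos (k + m) (ht0 j)).ne'
  rw [one_sub_div htne, div_pow, div_pow, pow_add]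
  field_simp

/-- the conditional distribution converges to a binomial distribution:
if `t_j → ∞` and `s_j/t_j → θ ∈ (0,1)` then
`C(n,k) B_k(a s_j) B_{n-k}(a(t_j - s_j)) / B_n(a t_j) → C(n,k) θ^k (1-θ)^{n-k}`. -/
theorem stmt9 (a : ℝ) (ha : 0 < a) (n k : ℕ) (hk : k ≤ n)
    (θ : ℝ) (hθ : θ ∈ Set.Ioo (0 : ℝ) 1)
    (s t : ℕ → ℝ) (hs : ∀ j, 0 < s j) (hst : ∀ j, s j < t j)
    (ht : Tendsto t atTop atTop)
    (hratio : Tendsto (fun j => s j / t j) atTop (nhds θ)) :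
    Tendsto (fun j => (Nat.choose n k : ℝ) * bell k (a * s j) * bell (n - k) (a * (t j - s j))
        / bell n (a * t j)) atTop
      (nhds ((Nat.choose n k : ℝ) * θ ^ k * (1 - θ) ^ (n - k))) := by
  have hscaled := tendsto_bell_mul_bell_div_bell hθ (s := fun j => a * s j)
    (t := fun j => a * t j) (fun j => mul_pos ha (hs j)) (fun j => mul_lt_mul_of_pos_left (hst j) ha)
    (ht.const_mul_atTop ha) (by simpa only [mul_div_mul_left _ _ ha.ne'] using hratio) k (n - k)
  rw [Nat.add_sub_cancel' hk] at hscaled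
  simpa only [mul_sub, mul_assoc, mul_div_assoc] using hscaled.const_mul (n.choose k : ℝ)
end

section
/- For all λ > 0, μ > 0 and every integer k ≥ 1, the mean first-crossing time of the iterated Poisson process through the constant boundary k equals ∫_0^∞ P_{k-1}(t) dt = (1/(λ(1-e^{-μ}))) · [1 + Σ_{i=1}^{k-1} (i!/(e^{μ}-1)^i) Σ_{j=i}^{k-1} S_2(j,i) μ^j/j!] (for k = 1 the sum over i is empty and the mean is 1/(λ(1-e^{-μ}))). -/
open scoped BigOperators
open Filter MeasureTheory

/-- pmf of the iterated Poisson process: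
`p_m(t) = e^{-λt(1-e^{-μ})} (μ^m/m!) B_m(λ t e^{-μ})`. -/
noncomputable def iterP (lam mu t : ℝ) (m : ℕ) : ℝ :=
  Real.exp (-lam * t * (1 - Real.exp (-mu))) * (mu ^ m / (Nat.factorial m : ℝ)) *
    bell m (lam * t * Real.exp (-mu))

/-- Stirling numbers of the second kind:
`S2 n k = (1/k!) Σ_{i=0}^k (-1)^i C(k,i) (k-i)^n`. -/
noncomputable def S2 (n k : ℕ) : ℝ :=
  (1 / (Nat.factorial k : ℝ)) * ∑ i ∈ Finset.range (k + 1),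
    (-1 : ℝ) ^ i * (Nat.choose k i : ℝ) * ((k - i : ℕ) : ℝ) ^ n

/-!
Touchard's formula `B_n(x) = ∑ᵢ S₂(n,i) xⁱ` comes from the Cauchy product of `e^{-x}` with
`∑ₖ kⁿ xᵏ / k!`; it is a finite sum because `i! S₂(n,i)` is the `i`-th forward difference of
`xⁿ` at `0`, which vanishes for `i > n`. Hence `p_j(t)` is a finite combination of
`tⁱ e^{-at}` with `a = λ(1 - e^{-μ})`, each integrating to `i!/a^{i+1}` over `(0, ∞)`. Since
`λe^{-μ}/a = 1/(e^μ - 1)`, exchanging the sums over `i ≤ j < k` gives the formula; the `i = 0`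
column contributes only `j = 0`, i.e. `1/a`.
-/

open Finset
open scoped Nat

theorem S2_zero_right (n : ℕ) : S2 n 0 = 0 ^ n := by
  simp [S2]

theorem S2_eq_zero_of_lt {n k : ℕ} (h : n < k) : S2 n k = 0 := by
  have hdiff := congrFun (fwdDiff_iter_pow_eq_zero_of_lt (R := ℝ) h) 0
  rw [Pi.zero_apply, fwdDiff_iter_eq_sum_shift, ← sum_range_reflect] at hdiff
  rw [S2, mul_eq_zero]
  refine Or.inr ((sum_congr rfl fun i hi => ?_).trans hdiff)
  have hik : i ≤ k := Nat.lt_succ_iff.mp (mem_range.mp hi)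
  simp [Nat.sub_sub_self hik, Nat.choose_symm hik, mul_assoc]

theorem S2_mul_pow_eq_sum_antidiagonal (n i : ℕ) (x : ℝ) :
    S2 n i * x ^ i = ∑ ml ∈ antidiagonal i,
      (ml.1 : ℝ) ^ n * x ^ ml.1 / (ml.1)! * ((-x) ^ ml.2 / (ml.2)!) := by
  rw [← Nat.sum_antidiagonal_swap, Nat.sum_antidiagonal_eq_sum_range_succ_mk, S2, mul_comm,
    ← mul_assoc, mul_sum]
  refine sum_congr rfl fun l hl => ?_
  have hli : l ≤ i := Nat.lt_succ_iff.mp (mem_range.mp hl)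
  have hfac : (i.choose l : ℝ) * l ! * (i - l)! = i ! := by
    exact_mod_cast Nat.choose_mul_factorial_mul_factorial hli
  have hchoose : (i.choose l : ℝ) ≠ 0 := by exact_mod_cast (Nat.choose_pos hli).ne'
  simp only [Prod.swap]
  rw [← pow_sub_mul_pow x hli, ← hfac]
  field_simp
  rw [neg_pow]
  ring

theorem summable_pow_mul_pow_div_factorial (n : ℕ) (x : ℝ) :
    Summable fun m : ℕ => (m : ℝ) ^ n * x ^ m / m ! := by
  refine .of_norm_bounded
    ((Real.summable_pow_div_factorial (Real.exp 1 * |x|)).mul_left (n ! : ℝ)) fun m => ?_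
  have hpow : (m : ℝ) ^ n ≤ n ! * Real.exp 1 ^ m := by
    have := Real.pow_div_factorial_le_exp (m : ℝ) (Nat.cast_nonneg m) n
    rw [div_le_iff₀ (by positivity)] at this
    rw [← Real.exp_nat_mul, mul_one]
    linarith
  rw [norm_div, norm_mul, norm_pow, norm_pow, Real.norm_natCast, Real.norm_natCast,
    Real.norm_eq_abs, mul_pow, ← mul_div_assoc, ← mul_assoc]
  gcongr

theorem hasSum_S2_mul_pow (n : ℕ) (x : ℝ) : HasSum (fun i => S2 n i * x ^ i) (bell n x) := by
  have hf : Summable fun m : ℕ => ‖(m : ℝ) ^ n * x ^ m / (m ! : ℝ)‖ := by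
    simpa [abs_pow] using summable_pow_mul_pow_div_factorial n |x|
  have hg : Summable fun l : ℕ => ‖(-x) ^ l / (l ! : ℝ)‖ := by
    simpa [abs_pow] using Real.summable_pow_div_factorial |x|
  simp_rw [S2_mul_pow_eq_sum_antidiagonal]
  rw [bell, mul_comm, Real.exp_eq_exp_ℝ, NormedSpace.exp_eq_tsum_div,
    tsum_mul_tsum_eq_tsum_sum_antidiagonal_of_summable_norm hf hg]
  exact (summable_norm_sum_mul_antidiagonal_of_summable_norm hf hg).of_norm.hasSum

theorem bell_eq_sum_S2_mul_pow (n : ℕ) (x : ℝ) :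
    bell n x = ∑ i ∈ range (n + 1), S2 n i * x ^ i :=
  (hasSum_S2_mul_pow n x).unique <| hasSum_sum_of_ne_finset_zero fun i hi => by
    rw [S2_eq_zero_of_lt (by simpa using hi), zero_mul]

section Laplace

open Set

variable {a : ℝ}

theorem integrableOn_pow_mul_exp_neg_mul (ha : 0 < a) (i : ℕ) :
    IntegrableOn (fun t : ℝ => t ^ i * Real.exp (-(a * t))) (Ioi 0) := by
  simpa [Real.rpow_natCast] using integrableOn_rpow_mul_exp_neg_mul_rpow
    (neg_one_lt_zero.trans_le (Nat.cast_nonneg i)) one_pos ha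

theorem integral_pow_mul_exp_neg_mul_Ioi (ha : 0 < a) (i : ℕ) :
    ∫ t in Ioi (0 : ℝ), t ^ i * Real.exp (-(a * t)) = i ! / a ^ (i + 1) := by
  have h := Real.integral_rpow_mul_exp_neg_mul_Ioi (Nat.cast_add_one_pos i) ha
  rw [Real.Gamma_nat_eq_factorial, add_sub_cancel_right, ← Nat.cast_succ, Real.rpow_natCast] at h
  simp_rw [Real.rpow_natCast] at h
  rw [h, div_pow, one_pow, one_div_mul_eq_div]

theorem exp_neg_mul_mul_bell_eq_sum (b t : ℝ) (n : ℕ) :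
    Real.exp (-(a * t)) * bell n (b * t)
      = ∑ i ∈ range (n + 1), S2 n i * b ^ i * (t ^ i * Real.exp (-(a * t))) := by
  rw [bell_eq_sum_S2_mul_pow, mul_sum]
  exact sum_congr rfl fun i _ => by ring

theorem integrableOn_exp_neg_mul_mul_bell (ha : 0 < a) (b : ℝ) (n : ℕ) :
    IntegrableOn (fun t => Real.exp (-(a * t)) * bell n (b * t)) (Ioi 0) := by
  simp_rw [exp_neg_mul_mul_bell_eq_sum]
  exact integrable_finsetSum _ fun i _ => (integrableOn_pow_mul_exp_neg_mul ha i).const_mul _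

theorem integral_exp_neg_mul_mul_bell (ha : 0 < a) (b : ℝ) (n : ℕ) :
    ∫ t in Ioi (0 : ℝ), Real.exp (-(a * t)) * bell n (b * t)
      = ∑ i ∈ range (n + 1), S2 n i * b ^ i * (i ! / a ^ (i + 1)) := by
  simp_rw [exp_neg_mul_mul_bell_eq_sum]
  rw [integral_finsetSum _ fun i _ => (integrableOn_pow_mul_exp_neg_mul ha i).const_mul _]
  simp_rw [integral_const_mul, integral_pow_mul_exp_neg_mul_Ioi ha]

end Laplace

section IteratedPoisson

open Set

variable {lam mu : ℝ}

theorem iterP_eq_mul_exp_neg_mul_mul_bell (t : ℝ) (j : ℕ) :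
    iterP lam mu t j = mu ^ j / j ! *
      (Real.exp (-(lam * (1 - Real.exp (-mu)) * t)) * bell j (lam * Real.exp (-mu) * t)) := by
  rw [iterP, show -lam * t * (1 - Real.exp (-mu)) = -(lam * (1 - Real.exp (-mu)) * t) by ring,
    show lam * t * Real.exp (-mu) = lam * Real.exp (-mu) * t by ring]
  ring

theorem lam_mul_one_sub_exp_neg_pos (hlam : 0 < lam) (hmu : 0 < mu) :
    0 < lam * (1 - Real.exp (-mu)) :=
  mul_pos hlam (sub_pos.mpr (Real.exp_lt_one_iff.mpr (neg_lt_zero.mpr hmu)))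

theorem integrableOn_iterP (hlam : 0 < lam) (hmu : 0 < mu) (j : ℕ) :
    IntegrableOn (fun t => iterP lam mu t j) (Ioi 0) := by
  simp_rw [iterP_eq_mul_exp_neg_mul_mul_bell]
  exact (integrableOn_exp_neg_mul_mul_bell (lam_mul_one_sub_exp_neg_pos hlam hmu) _ j).const_mul _

theorem integral_iterP (hlam : 0 < lam) (hmu : 0 < mu) (j : ℕ) :
    ∫ t in Ioi (0 : ℝ), iterP lam mu t j = 1 / (lam * (1 - Real.exp (-mu))) *
      ∑ i ∈ range (j + 1), (i ! : ℝ) / (Real.exp mu - 1) ^ i * (S2 j i * mu ^ j / j !) := by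
  have ha := lam_mul_one_sub_exp_neg_pos hlam hmu
  have hE : Real.exp mu - 1 ≠ 0 := (sub_pos.mpr (Real.one_lt_exp_iff.mpr hmu)).ne'
  simp_rw [iterP_eq_mul_exp_neg_mul_mul_bell]
  rw [integral_const_mul, integral_exp_neg_mul_mul_bell ha, mul_sum, mul_sum]
  refine sum_congr rfl fun i _ => ?_
  have hb : lam * Real.exp (-mu) = lam * (1 - Real.exp (-mu)) / (Real.exp mu - 1) := by
    rw [eq_div_iff hE, Real.exp_neg]
    field_simp
  rw [hb, div_pow]
  generalize lam * (1 - Real.exp (-mu)) = a at ha ⊢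
  field_simp
  ring

end IteratedPoisson

/-- mean first-crossing time of the iterated Poisson process through the
constant boundary `k ≥ 1`:
`∫_0^∞ P_{k-1}(t) dt = (1/(λ(1-e^{-μ}))) [1 + Σ_{i=1}^{k-1} (i!/(e^μ-1)^i) Σ_{j=i}^{k-1} S2(j,i) μ^j/j!]`. -/
theorem stmt16 (lam mu : ℝ) (hlam : 0 < lam) (hmu : 0 < mu) (k : ℕ) (hk : 1 ≤ k) :
    ∫ t in Set.Ioi (0 : ℝ), (∑ j ∈ Finset.range k, iterP lam mu t j)
      = (1 / (lam * (1 - Real.exp (-mu)))) *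
          (1 + ∑ i ∈ Finset.Icc 1 (k - 1), (Nat.factorial i : ℝ) / (Real.exp mu - 1) ^ i *
            ∑ j ∈ Finset.Icc i (k - 1), S2 j i * mu ^ j / (Nat.factorial j : ℝ)) := by
  rw [integral_finsetSum _ fun j _ => integrableOn_iterP hlam hmu j]
  simp_rw [integral_iterP hlam hmu, ← mul_sum]
  congr 1
  rw [sum_comm' (t' := insert 0 (Icc 1 (k - 1))) (s' := fun i => Icc i (k - 1))
      (by intro j i; simp only [mem_range, mem_insert, mem_Icc]; omega),
    sum_insert (by simp)]
  congr 1
  · rw [sum_eq_single_of_mem 0 (by simp) fun j _ hj => by simp [S2_zero_right, hj]]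
    simp [S2_zero_right]
  · simp_rw [mul_sum]
end
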